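/- Let A be a real 3×3 matrix with trace zero and b, c ∈ ℝ³. Define the linear map D : Õ → Õ by D(x, q, p, y) = (p·b + c·q, Aq + (x − y)b + p × c, −Aᵀp + b × q + (x − y)c, −(p·b + c·q)). Then D is a derivation of Õ: D(ζ * ζ') = D(ζ) * ζ' + ζ * D(ζ') for all ζ, ζ' ∈ Õ. -/

import Mathlib

/-! The map `ρ̃(A, b, c)` is linear in `(A, b, c)` and the derivations of `Õ` form a vector space,
so it suffices to treat `ρ̃(A, 0, 0)`, `ρ̃(0, b, 0)` and `ρ̃(0, 0, c)` separately. For `ρ̃(A, 0, 0)`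
the Leibniz rule reduces to `(Au) × v + u × (Av) = -Aᵀ(u × v)` for traceless `A`; for
`ρ̃(0, b, 0)` it reduces to the expansion `u × (v × w) = (u·w) v - (u·v) w` and the cyclic symmetry
of the triple product. Finally `(x, q, p, y) ↦ (y, p, q, x)` is an automorphism of `Õ` which
conjugates `ρ̃(0, -c, 0)` into `ρ̃(0, 0, c)`. -/

open Matrix

/-- The split-octonions as Zorn vector matrices `(x, q, p, y)`. -/
abbrev Oct : Type := ℝ × (Fin 3 → ℝ) × (Fin 3 → ℝ) × ℝ

/-- Zorn vector-matrix multiplication of split-octonions. -/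
def octMul (ζ ζ' : Oct) : Oct :=
  (ζ.1 * ζ'.1 - ζ'.2.2.1 ⬝ᵥ ζ.2.1,
   ζ.1 • ζ'.2.1 + ζ'.2.2.2 • ζ.2.1 + ζ.2.2.1 ⨯₃ ζ'.2.2.1,
   ζ'.1 • ζ.2.2.1 + ζ.2.2.2 • ζ'.2.2.1 + ζ.2.1 ⨯₃ ζ'.2.1,
   ζ.2.2.2 * ζ'.2.2.2 - ζ.2.2.1 ⬝ᵥ ζ'.2.1)

/-- Cartan's realization `ρ̃(A, b, c)` of a general element of `g₂ = Der(Õ)`. -/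
def octD (A : Matrix (Fin 3) (Fin 3) ℝ) (b c : Fin 3 → ℝ) (ζ : Oct) : Oct :=
  (ζ.2.2.1 ⬝ᵥ b + c ⬝ᵥ ζ.2.1,
   A *ᵥ ζ.2.1 + (ζ.1 - ζ.2.2.2) • b + ζ.2.2.1 ⨯₃ c,
   -(A.transpose *ᵥ ζ.2.2.1) + b ⨯₃ ζ.2.1 + (ζ.1 - ζ.2.2.2) • c,
   -(ζ.2.2.1 ⬝ᵥ b + c ⬝ᵥ ζ.2.1))

/-- The linearization at the identity of the cofactor identity `(Mu) × (Mv) = adj(M)ᵀ (u × v)`. -/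
theorem mulVec_cross_add_cross_mulVec {R : Type*} [CommRing R] (M : Matrix (Fin 3) (Fin 3) R)
    (u v : Fin 3 → R) :
    (M *ᵥ u) ⨯₃ v + u ⨯₃ (M *ᵥ v) = M.trace • (u ⨯₃ v) - Mᵀ *ᵥ (u ⨯₃ v) := by
  ext i
  fin_cases i <;>
  · simp only [cross_apply, mulVec, dotProduct, trace, diag_apply, transpose_apply,
      Fin.sum_univ_three, Fin.isValue, Fin.zero_eta, Fin.mk_one, Fin.reduceFinMk, Pi.add_apply,
      Pi.sub_apply, smul_cons, smul_eq_mul, smul_empty, cons_val_zero, cons_val_one, cons_val]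
    ring

theorem octMul_add (ζ ζ₁ ζ₂ : Oct) : octMul ζ (ζ₁ + ζ₂) = octMul ζ ζ₁ + octMul ζ ζ₂ := by
  refine Prod.ext ?_ (Prod.ext ?_ (Prod.ext ?_ ?_)) <;>
    simp only [octMul, Prod.fst_add, Prod.snd_add, add_dotProduct, dotProduct_add, smul_add,
      add_smul, map_add]
  exacts [by ring, by abel, by abel, by ring]

theorem add_octMul (ζ₁ ζ₂ ζ : Oct) : octMul (ζ₁ + ζ₂) ζ = octMul ζ₁ ζ + octMul ζ₂ ζ := by
  refine Prod.ext ?_ (Prod.ext ?_ (Prod.ext ?_ ?_)) <;>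
    simp only [octMul, Prod.fst_add, Prod.snd_add, add_dotProduct, dotProduct_add, smul_add,
      add_smul, map_add, LinearMap.add_apply]
  exacts [by ring, by abel, by abel, by ring]

def octSwap (ζ : Oct) : Oct := (ζ.2.2.2, ζ.2.2.1, ζ.2.1, ζ.1)

theorem octSwap_octSwap (ζ : Oct) : octSwap (octSwap ζ) = ζ := rfl

theorem octSwap_add (ζ₁ ζ₂ : Oct) : octSwap (ζ₁ + ζ₂) = octSwap ζ₁ + octSwap ζ₂ := rfl

theorem octSwap_octMul (ζ ζ' : Oct) :
    octSwap (octMul ζ ζ') = octMul (octSwap ζ) (octSwap ζ') := by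
  simp only [octSwap, octMul, Prod.mk.injEq]
  exact ⟨by rw [dotProduct_comm], by abel, by abel, by rw [dotProduct_comm]⟩

theorem octSwap_octD_octSwap (A : Matrix (Fin 3) (Fin 3) ℝ) (b c : Fin 3 → ℝ) (ζ : Oct) :
    octSwap (octD A b c (octSwap ζ)) = octD (-Aᵀ) (-c) (-b) ζ := by
  obtain ⟨x, q, p, y⟩ := ζ
  simp only [octSwap, octD, transpose_neg, transpose_transpose, neg_neg, Prod.mk.injEq,
    dotProduct_neg, neg_dotProduct, neg_mulVec, map_neg, LinearMap.neg_apply, cross_anticomm,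
    dotProduct_comm q b, dotProduct_comm c p]
  exact ⟨by ring, by module, by module, by ring⟩

theorem octD_eq_add (A : Matrix (Fin 3) (Fin 3) ℝ) (b c : Fin 3 → ℝ) :
    octD A b c = octD A 0 0 + octD 0 b 0 + octD 0 0 c := by
  funext ⟨x, q, p, y⟩
  simp only [octD, Pi.add_apply, Prod.mk_add_mk, zero_mulVec, transpose_zero, dotProduct_zero,
    zero_dotProduct, smul_zero, map_zero, LinearMap.zero_apply, neg_zero, add_zero, zero_add,
    neg_add]

def IsOctDerivation (D : Oct → Oct) : Prop :=
  ∀ ζ ζ' : Oct, D (octMul ζ ζ') = octMul (D ζ) ζ' + octMul ζ (D ζ')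

theorem IsOctDerivation.add {D₁ D₂ : Oct → Oct} (h₁ : IsOctDerivation D₁)
    (h₂ : IsOctDerivation D₂) : IsOctDerivation (D₁ + D₂) := fun ζ ζ' => by
  simp only [Pi.add_apply, h₁ ζ ζ', h₂ ζ ζ', octMul_add, add_octMul]
  abel

theorem IsOctDerivation.octSwap_comp {D : Oct → Oct} (hD : IsOctDerivation D) :
    IsOctDerivation (octSwap ∘ D ∘ octSwap) := fun ζ ζ' => by
  simp only [Function.comp_apply]
  rw [octSwap_octMul, hD, octSwap_add, octSwap_octMul, octSwap_octMul, octSwap_octSwap,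
    octSwap_octSwap]

theorem isOctDerivation_octD_matrix {A : Matrix (Fin 3) (Fin 3) ℝ} (hA : A.trace = 0) :
    IsOctDerivation (octD A 0 0) := by
  have hAt : Aᵀ.trace = 0 := by rwa [trace_transpose]
  rintro ⟨x, q, p, y⟩ ⟨x', q', p', y'⟩
  simp only [octD, octMul, dotProduct_zero, zero_dotProduct, add_zero, smul_zero, map_zero,
    LinearMap.zero_apply, mul_zero, zero_mul, neg_zero, Prod.mk_add_mk]
  refine Prod.ext ?_ (Prod.ext ?_ (Prod.ext ?_ ?_)) <;> dsimp only
  · rw [dotProduct_mulVec, neg_dotProduct, mulVec_transpose]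
    ring
  · have h := mulVec_cross_add_cross_mulVec Aᵀ p p'
    rw [hAt, zero_smul, zero_sub, transpose_transpose] at h
    simp only [mulVec_add, mulVec_smul, map_neg, LinearMap.neg_apply]
    linear_combination (norm := module) h
  · have h := mulVec_cross_add_cross_mulVec A q q'
    rw [hA, zero_smul, zero_sub] at h
    simp only [mulVec_add, mulVec_smul, neg_add, ← smul_neg]
    linear_combination (norm := module) -h
  · rw [dotProduct_mulVec, neg_dotProduct, mulVec_transpose]
    ring

theorem isOctDerivation_octD_vector (b : Fin 3 → ℝ) : IsOctDerivation (octD 0 b 0) := by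
  rintro ⟨x, q, p, y⟩ ⟨x', q', p', y'⟩
  simp only [octD, octMul, zero_mulVec, transpose_zero, neg_zero, zero_add, zero_dotProduct,
    add_zero, smul_zero, map_zero, Prod.mk_add_mk]
  refine Prod.ext ?_ (Prod.ext ?_ (Prod.ext ?_ ?_)) <;> dsimp only
  · have h : (q ⨯₃ q') ⬝ᵥ b = -((b ⨯₃ q') ⬝ᵥ q) := by
      rw [dotProduct_comm, dotProduct_comm _ q, triple_product_permutation, ← cross_anticomm,
        dotProduct_neg]
    simp only [add_dotProduct, smul_dotProduct, dotProduct_smul, smul_eq_mul, h]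
    ring
  · have h₁ : (b ⨯₃ q) ⨯₃ p' = (p' ⬝ᵥ b) • q - (p' ⬝ᵥ q) • b := by
      rw [cross_cross_eq_smul_sub_smul, dotProduct_comm b, dotProduct_comm q]
    have h₂ : p ⨯₃ (b ⨯₃ q') = (p ⬝ᵥ q') • b - (p ⬝ᵥ b) • q' := by
      rw [cross_cross_eq_smul_sub_smul', dotProduct_comm b]
    rw [h₁, h₂]
    module
  · have h : b ⨯₃ (p ⨯₃ p') = (p' ⬝ᵥ b) • p - (p ⬝ᵥ b) • p' := by
      rw [cross_cross_eq_smul_sub_smul', dotProduct_comm b, dotProduct_comm p]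
    simp only [map_add, map_smul, LinearMap.smul_apply, h, ← cross_anticomm b q]
    module
  · have h : (q ⨯₃ q') ⬝ᵥ b = (b ⨯₃ q) ⬝ᵥ q' := by
      rw [dotProduct_comm, triple_product_permutation, triple_product_permutation, dotProduct_comm]
    simp only [add_dotProduct, smul_dotProduct, dotProduct_smul, smul_eq_mul, h]
    ring

theorem isOctDerivation_octD_covector (c : Fin 3 → ℝ) : IsOctDerivation (octD 0 0 c) := by
  have h : octD 0 0 c = octSwap ∘ octD 0 (-c) 0 ∘ octSwap := by
    funext ζ
    simp only [Function.comp_apply, octSwap_octD_octSwap, transpose_zero, neg_zero, neg_neg]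
  rw [h]
  exact (isOctDerivation_octD_vector (-c)).octSwap_comp

theorem octD_is_derivation (A : Matrix (Fin 3) (Fin 3) ℝ) (hA : A.trace = 0)
    (b c : Fin 3 → ℝ) :
    ∀ ζ ζ' : Oct,
      octD A b c (octMul ζ ζ')
        = octMul (octD A b c ζ) ζ' + octMul ζ (octD A b c ζ') := by
  rw [octD_eq_add]
  exact ((isOctDerivation_octD_matrix hA).add (isOctDerivation_octD_vector b)).add
    (isOctDerivation_octD_covector c)
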